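/- arXiv:2001.04452 — 2 statements merged into one kernel-verified Lean document; each statement's English description precedes it below -/
import Mathlib

section
/- Let α ∈ (0,1), let X be a finite nonempty set, and let e⁰, e¹, …, e^M : X → ℝ. Fix m ∈ {1,…,M} and let x* ∈ X be a point where the function x ↦ |e^m(x)| attains its maximum over X. Then sgn(e^m(x*)) · (δ_t^α e^m)(x*) ≥ δ_t^α ν^m, where (δ_t^α e^m)(x*) denotes the L1 operator applied to the real sequence (e^j(x*))_{j=0}^M, (ν^j) is the real sequence ν^j := max_{x∈X} |e^j(x)|, and sgn is the sign function (with sgn(0) = 0). -/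
open Real MeasureTheory

/-- The L1 discrete Caputo operator of order `α` on the temporal mesh `t`. -/
noncomputable def deltaL1 (α : ℝ) (t : ℕ → ℝ) (V : ℕ → ℝ) (m : ℕ) : ℝ :=
  (1 / Real.Gamma (1 - α)) *
    ∑ j ∈ Finset.Icc 1 m,
      ((V j - V (j - 1)) / (t j - t (j - 1))) *
        ∫ s in (t (j - 1))..(t j), (t m - s) ^ (-α)

/-!
Put `s = sgn (e^m(x*))` and `g^j = s · e^j(x*) − ν^j`. Then `g^j ≤ 0` for all `j` and `g^m = 0`,
and `δ_t^α` is linear, so it suffices to show `δ_t^α g^m ≥ 0` for every such `g`.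
Evaluating the integrals, `δ_t^α g^m` is a positive multiple of `∑ⱼ (g^j − g^{j−1}) wⱼ`, where `wⱼ` is
the slope of `x ↦ x^(1−α)` on `[t_m − t_j, t_m − t_{j−1}]`. By concavity these weights are
nonnegative and increase with `j`, and summation by parts gives the sign.
-/

open Finset

lemma Real.sign_mul_le_abs (a b : ℝ) : Real.sign a * b ≤ |b| := by
  rcases Real.sign_apply_eq a with h | h | h <;> rw [h]
  · simpa using neg_le_abs b
  · simp
  · simpa using le_abs_self b

lemma Real.sign_mul_self (a : ℝ) : Real.sign a * a = |a| := by
  rcases lt_trichotomy a 0 with h | rfl | h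
  · rw [Real.sign_of_neg h, abs_of_neg h, neg_one_mul]
  · simp
  · rw [Real.sign_of_pos h, abs_of_pos h, one_mul]

lemma mul_le_sum_Icc_sub_mul {g w : ℕ → ℝ} {m : ℕ} (hm : 1 ≤ m) (hw₁ : 0 ≤ w 1)
    (hw : ∀ j, 1 ≤ j → j < m → w j ≤ w (j + 1)) (hg : ∀ j < m, g j ≤ 0) :
    g m * w m ≤ ∑ j ∈ Icc 1 m, (g j - g (j - 1)) * w j := by
  induction m, hm using Nat.le_induction with
  | base =>
    rw [Icc_self, sum_singleton]
    linarith [mul_nonpos_of_nonpos_of_nonneg (hg 0 one_pos) hw₁]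
  | succ n hn ih =>
    rw [sum_Icc_succ_top (by omega), Nat.add_sub_cancel]
    have hsum := ih (fun j hj₁ hj => hw j hj₁ (by omega)) (fun j hj => hg j (by omega))
    linarith [mul_nonneg_of_nonpos_of_nonpos (hg n (by omega)) (sub_nonpos.2 (hw n hn (by omega)))]

lemma deltaL1_mul_sub (α : ℝ) (t V U : ℕ → ℝ) (c : ℝ) (m : ℕ) :
    deltaL1 α t (fun j => c * V j - U j) m = c * deltaL1 α t V m - deltaL1 α t U m := by
  simp only [deltaL1, mul_sum, ← sum_sub_distrib]
  exact sum_congr rfl fun j _ => by ring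

lemma integral_sub_rpow_neg {α : ℝ} (hα : α < 1) (a b c : ℝ) :
    ∫ s in a..b, (c - s) ^ (-α) = ((c - a) ^ (1 - α) - (c - b) ^ (1 - α)) / (1 - α) := by
  rw [intervalIntegral.integral_comp_sub_left (fun u => u ^ (-α)) c,
    integral_rpow (Or.inl (by linarith)), neg_add_eq_sub]

noncomputable def l1Weight (α : ℝ) (t : ℕ → ℝ) (m j : ℕ) : ℝ :=
  slope (fun x : ℝ => x ^ (1 - α)) (t m - t j) (t m - t (j - 1))

lemma deltaL1_eq_sum_mul_l1Weight {α : ℝ} (hα : α < 1) (t V : ℕ → ℝ) (m : ℕ) :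
    deltaL1 α t V m =
      (Gamma (1 - α) * (1 - α))⁻¹ * ∑ j ∈ Icc 1 m, (V j - V (j - 1)) * l1Weight α t m j := by
  simp only [deltaL1, integral_sub_rpow_neg hα, l1Weight, slope_def_field, mul_sum]
  refine sum_congr rfl fun j _ => ?_
  rw [show t m - t (j - 1) - (t m - t j) = t j - t (j - 1) by ring]
  field_simp

lemma l1Weight_one_nonneg {α : ℝ} (hα : α ≤ 1) {t : ℕ → ℝ} {m : ℕ} (hm : 1 ≤ m)
    (ht : StrictMonoOn t (Set.Iic m)) : 0 ≤ l1Weight α t m 1 := by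
  refine (Real.monotoneOn_rpow_Ici_of_exponent_nonneg (by linarith)).slope_nonneg ?_ ?_
  · exact sub_nonneg.2 (ht.monotoneOn (by simpa) (by simp) hm)
  · exact sub_nonneg.2 (ht.monotoneOn (by simp) (by simp) (Nat.zero_le m))

lemma l1Weight_le_succ {α : ℝ} (hα : α ∈ Set.Icc (0 : ℝ) 1) {t : ℕ → ℝ} {m j : ℕ}
    (ht : StrictMonoOn t (Set.Iic m)) (hj : 1 ≤ j) (hjm : j < m) :
    l1Weight α t m j ≤ l1Weight α t m (j + 1) := by
  have hsucc : t j < t (j + 1) := ht (by simp; omega) (by simpa) (Nat.lt_succ_self j)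
  have hpred : t (j - 1) < t j := ht (by simp; omega) (by simp; omega) (by omega)
  have key :=
    (concaveOn_rpow (p := 1 - α) (by linarith [hα.2]) (by linarith [hα.1])).slope_anti_adjacent
    (x := t m - t (j + 1)) (y := t m - t j) (z := t m - t (j - 1))
    (sub_nonneg.2 (ht.monotoneOn (by simpa) (by simp) hjm))
    (sub_nonneg.2 (ht.monotoneOn (by simp; omega) (by simp) (by omega)))
    (by linarith) (by linarith)
  simpa only [l1Weight, slope_def_field, Nat.add_sub_cancel] using key

lemma deltaL1_nonneg_of_nonpos {α : ℝ} (hα : α ∈ Set.Ico (0 : ℝ) 1) {t g : ℕ → ℝ} {m : ℕ}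
    (ht : StrictMonoOn t (Set.Iic m)) (hg : ∀ j < m, g j ≤ 0) (hgm : g m = 0) :
    0 ≤ deltaL1 α t g m := by
  rcases Nat.eq_zero_or_pos m with rfl | hm
  · simp [deltaL1]
  rw [deltaL1_eq_sum_mul_l1Weight hα.2]
  have hΓ : 0 < Gamma (1 - α) * (1 - α) := by
    have : 0 < 1 - α := by linarith [hα.2]
    exact mul_pos (Gamma_pos_of_pos this) this
  refine mul_nonneg (inv_nonneg.2 hΓ.le) ?_
  have hsum := mul_le_sum_Icc_sub_mul hm (l1Weight_one_nonneg hα.2.le hm ht)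
    (fun j hj hjm => l1Weight_le_succ ⟨hα.1, hα.2.le⟩ ht hj hjm) hg
  rwa [hgm, zero_mul] at hsum

theorem stmt12_general
    (α : ℝ) (hα : α ∈ Set.Ioo (0 : ℝ) 1)
    (M : ℕ) (t : ℕ → ℝ)
    (hmono : ∀ j, j < M → t j < t (j + 1))
    (X : Type*) [Fintype X] [Nonempty X]
    (e : ℕ → X → ℝ)
    (m : ℕ) (hmM : m ≤ M)
    (xstar : X) (hmax : ∀ x, |e m x| ≤ |e m xstar|) :
    Real.sign (e m xstar) * deltaL1 α t (fun j => e j xstar) m ≥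
      deltaL1 α t (fun j => ⨆ x : X, |e j x|) m := by
  have hle : ∀ j x, |e j x| ≤ ⨆ x : X, |e j x| := fun j => le_ciSup (Set.finite_range _).bddAbove
  have hνm : ⨆ x : X, |e m x| = |e m xstar| := le_antisymm (ciSup_le hmax) (hle m xstar)
  have ht : StrictMonoOn t (Set.Iic m) :=
    strictMonoOn_Iic_of_lt_succ fun j hj => by simpa using hmono j (by omega)
  have key := deltaL1_nonneg_of_nonpos ⟨hα.1.le, hα.2⟩ ht
    (g := fun j => Real.sign (e m xstar) * e j xstar - ⨆ x : X, |e j x|)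
    (fun j _ => sub_nonpos.2 ((Real.sign_mul_le_abs _ _).trans (hle j xstar)))
    (by rw [Real.sign_mul_self, hνm, sub_self])
  rw [deltaL1_mul_sub] at key
  linarith

theorem stmt12
    (α T : ℝ) (hα : α ∈ Set.Ioo (0 : ℝ) 1) (hT : 0 < T)
    (M : ℕ) (hM : 1 ≤ M) (t : ℕ → ℝ)
    (ht0 : t 0 = 0) (htM : t M = T)
    (hmono : ∀ j, j < M → t j < t (j + 1))
    (X : Type*) [Fintype X] [Nonempty X]
    (e : ℕ → X → ℝ)
    (m : ℕ) (hm1 : 1 ≤ m) (hmM : m ≤ M)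
    (xstar : X) (hmax : ∀ x, |e m x| ≤ |e m xstar|) :
    Real.sign (e m xstar) * deltaL1 α t (fun j => e j xstar) m ≥
      deltaL1 α t (fun j => ⨆ x : X, |e j x|) m :=
  stmt12_general α hα M t hmono X e m hmM xstar hmax
end

section
/- Let α ∈ (0,1), λ ≥ 0, and let the temporal mesh satisfy λ τ_j^α ≤ 1/Γ(2−α) for all j = 1,…,M. Let Ω_h be a finite nonempty set and, for each m = 1,…,M, let A^{(m)} be a real Ω_h × Ω_h matrix that is a nonsingular M-matrix, i.e. all its off-diagonal entries are ≤ 0 and there exists an entrywise positive vector w with A^{(m)} w entrywise positive. Let f : Ω_h × {1,…,M} × ℝ → ℝ be continuous in its last argument and satisfy f(z,m,s₁) − f(z,m,s₂) ≥ −λ(s₁ − s₂) for all s₁ ≥ s₂, all z ∈ Ω_h and all m. Then: (i) for every u₀ : Ω_h → ℝ there is exactly one family (U^m)_{m=0}^M of vectors U^m : Ω_h → ℝ with U⁰ = u₀ and δ_t^α U^m(z) + (A^{(m)} U^m)(z) + f(z, m, U^m(z)) = 0 for all z ∈ Ω_h and m = 1,…,M (δ_t^α applied componentwise); (ii) if a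 family (Ū^m)_{m=0}^M satisfies Ū⁰ ≥ u₀ componentwise and δ_t^α Ū^m(z) + (A^{(m)} Ū^m)(z) + f(z, m, Ū^m(z)) ≥ 0 for all z ∈ Ω_h and m ≥ 1, then U^m ≤ Ū^m componentwise for all m = 0,…,M; (iii) if a family (U̲^m)_{m=0}^M satisfies the reversed inequalities U̲⁰ ≤ u₀ and δ_t^α U̲^m(z) + (A^{(m)} U̲^m)(z) + f(z, m, U̲^m(z)) ≤ 0, then U̲^m ≤ U^m componentwise for all m = 0,…,M. -/
/-!
The L1 operator is `δ_t^α V^m = ∑ j, K m j * (V^j - V^(j-1))` with weights `K m j` (`l1Coeff`)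
that are positive and nondecreasing in `j` by concavity of `x ↦ x ^ (1 - α)`, and the mesh
condition says exactly `λ ≤ K m m`. Hence `δ_t^α V^m ≤ K m m * V^m` as soon as `V^j ≥ 0` for
`j < m`. Comparing a lower and an upper solution at step `m`, their difference `e` then satisfies
`(A e)(z) ≥ -(K m m - λ) e(z) ≥ 0` at every node where `e(z) < 0`, which the minimum principle for
the M-matrix `A` (look at a minimum of `e / w`) rules out. Uniqueness, (ii) and (iii) follow.

Existence is proved step by step: `U^m` solves `A U + K m m * U + f(U) = b`, whose nonlinearity is
monotone because `K m m ≥ λ`. This system has the subsolution `-s w` and the supersolution `s w`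
for large `s`, and the nonlinear Jacobi map, which solves each row for its diagonal unknown, is
monotone; Tarski's fixed-point theorem on the order interval between them gives a solution.
-/

open Real MeasureTheory

open Finset Filter

theorem exists_fixedPoint_of_le_of_le {α : Type*} [ConditionallyCompleteLattice α] {T : α → α}
    (hT : Monotone T) {a b : α} (hab : a ≤ b) (ha : a ≤ T a) (hb : T b ≤ b) :
    ∃ x, T x = x := by
  have : Fact (a ≤ b) := ⟨hab⟩
  let T' : Set.Icc a b →o Set.Icc a b :=
    ⟨fun x => ⟨T x, ha.trans (hT x.2.1), (hT x.2.2).trans hb⟩, fun _ _ h => hT h⟩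
  exact ⟨T'.lfp, congrArg Subtype.val T'.map_lfp⟩

theorem exists_orderIso_mul_add {a : ℝ} (ha : 0 < a) {g : ℝ → ℝ} (hgc : Continuous g)
    (hgm : Monotone g) : ∃ e : ℝ ≃o ℝ, ∀ s, e s = a * s + g s := by
  have hmono : StrictMono fun s => a * s + g s :=
    (strictMono_mul_left_of_pos ha).add_monotone hgm
  have hsurj : Function.Surjective fun s => a * s + g s := by
    refine ((continuous_const.mul continuous_id).add hgc).surjective ?_ ?_
    · refine tendsto_atTop_add_right_of_le' _ (g 0) (tendsto_id.const_mul_atTop ha) ?_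
      filter_upwards [eventually_ge_atTop 0] with s hs using hgm hs
    · refine tendsto_atBot_add_right_of_ge' _ (g 0) (tendsto_id.const_mul_atBot ha) ?_
      filter_upwards [eventually_le_atBot 0] with s hs using hgm hs
  exact ⟨hmono.orderIsoOfSurjective _ hsurj, fun _ => rfl⟩

theorem sum_Icc_mul_sub_le {K V : ℕ → ℝ} {n : ℕ} (hn : 1 ≤ n) (hK₁ : 0 ≤ K 1)
    (hK : ∀ j, 1 ≤ j → j < n → K j ≤ K (j + 1)) (hV : ∀ j < n, 0 ≤ V j) :
    ∑ j ∈ Icc 1 n, K j * (V j - V (j - 1)) ≤ K n * V n := by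
  induction n, hn using Nat.le_induction with
  | base => simpa [mul_sub] using mul_nonneg hK₁ (hV 0 one_pos)
  | succ n hn ih =>
    rw [sum_Icc_succ_top (by omega), Nat.add_sub_cancel]
    have hprev := ih (fun j hj₁ hj => hK j hj₁ (by omega)) (fun j hj => hV j (by omega))
    have hstep : K n * V n ≤ K (n + 1) * V n :=
      mul_le_mul_of_nonneg_right (hK n hn (by omega)) (hV n (by omega))
    linarith

namespace Matrix

section OrderedField

variable {X R : Type*} [Fintype X] [Field R] [LinearOrder R] [IsStrictOrderedRing R]
  {A : Matrix X X R}

theorem mulVec_apply_le_diag_mul {z : X} (hoff : ∀ z', z' ≠ z → A z z' ≤ 0) {d : X → R}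
    (hd : 0 ≤ d) : (A *ᵥ d) z ≤ A z z * d z := by
  classical
  rw [mulVec, dotProduct, ← add_sum_erase _ _ (mem_univ z), add_le_iff_nonpos_right]
  exact sum_nonpos fun z' hz' =>
    mul_nonpos_of_nonpos_of_nonneg (hoff z' (ne_of_mem_erase hz')) (hd z')

theorem diag_pos_of_mulVec_pos (hoff : ∀ z z', z ≠ z' → A z z' ≤ 0) {w : X → R}
    (hw : ∀ z, 0 < w z) (hAw : ∀ z, 0 < (A *ᵥ w) z) (z : X) : 0 < A z z :=
  pos_of_mul_pos_left ((hAw z).trans_le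
    (mulVec_apply_le_diag_mul (fun z' h => hoff z z' h.symm) fun z => (hw z).le)) (hw z).le

theorem nonneg_of_mulVec_nonneg_of_neg (hoff : ∀ z z', z ≠ z' → A z z' ≤ 0) {w : X → R}
    (hw : ∀ z, 0 < w z) (hAw : ∀ z, 0 < (A *ᵥ w) z) {v : X → R}
    (hv : ∀ z, v z < 0 → 0 ≤ (A *ᵥ v) z) : 0 ≤ v := by
  intro z₁
  by_contra! hz₁
  have : Nonempty X := ⟨z₁⟩
  obtain ⟨z₀, hmin⟩ := Finite.exists_min fun z => v z / w z
  set θ := v z₀ / w z₀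
  have hθ : θ < 0 := (hmin z₁).trans_lt (div_neg_of_neg_of_pos hz₁ (hw z₁))
  have hvz₀ : v z₀ = θ * w z₀ := (div_mul_cancel₀ _ (hw z₀).ne').symm
  have hd : 0 ≤ v - θ • w := fun z => by
    have := mul_le_mul_of_nonneg_right (hmin z) (hw z).le
    rw [div_mul_cancel₀ _ (hw z).ne'] at this
    simpa [sub_nonneg] using this
  have hAd := mulVec_apply_le_diag_mul (fun z' h => hoff z₀ z' h.symm) hd
  rw [mulVec_sub, mulVec_smul] at hAd
  simp only [Pi.sub_apply, Pi.smul_apply, smul_eq_mul, hvz₀, sub_self, mul_zero] at hAd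
  have := hv z₀ (hvz₀ ▸ mul_neg_of_neg_of_pos hθ (hw z₀))
  nlinarith [mul_neg_of_neg_of_pos hθ (hAw z₀)]

end OrderedField

section Real

variable {X : Type*} [Fintype X] {A : Matrix X X ℝ} {φ : X → ℝ → ℝ}

theorem exists_mulVec_add_eq_of_le (hoff : ∀ z z', z ≠ z' → A z z' ≤ 0)
    (hdiag : ∀ z, 0 < A z z) (hφc : ∀ z, Continuous (φ z)) (hφm : ∀ z, Monotone (φ z))
    {b lo hi : X → ℝ} (hle : lo ≤ hi) (hlo : ∀ z, (A *ᵥ lo) z + φ z (lo z) ≤ b z)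
    (hhi : ∀ z, b z ≤ (A *ᵥ hi) z + φ z (hi z)) :
    ∃ V : X → ℝ, ∀ z, (A *ᵥ V) z + φ z (V z) = b z := by
  choose e he using fun z => exists_orderIso_mul_add (hdiag z) (hφc z) (hφm z)
  let T : (X → ℝ) → X → ℝ := fun V z => (e z).symm (b z - ((A *ᵥ V) z - A z z * V z))
  have hrow : ∀ V z, e z (V z) + ((A *ᵥ V) z - A z z * V z) = (A *ᵥ V) z + φ z (V z) := by
    intro V z
    rw [he]
    ring
  have hT : Monotone T := fun V V' h z => (e z).symm.monotone <| by
    have := mulVec_apply_le_diag_mul (z := z) (fun z' h' => hoff z z' h'.symm) (sub_nonneg.2 h)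
    rw [mulVec_sub] at this
    simp only [Pi.sub_apply] at this
    linarith
  obtain ⟨V, hV⟩ := exists_fixedPoint_of_le_of_le hT hle
    (fun z => (e z).le_symm_apply.2 (by linarith [hrow lo z, hlo z]))
    (fun z => (e z).symm_apply_le.2 (by linarith [hrow hi z, hhi z]))
  refine ⟨V, fun z => ?_⟩
  have hVz := congrArg (e z) (congrFun hV z)
  simp only [T, OrderIso.apply_symm_apply] at hVz
  linarith [hrow V z]

theorem exists_mulVec_add_eq (hoff : ∀ z z', z ≠ z' → A z z' ≤ 0) {w : X → ℝ}
    (hw : ∀ z, 0 < w z) (hAw : ∀ z, 0 < (A *ᵥ w) z) (hφc : ∀ z, Continuous (φ z))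
    (hφm : ∀ z, Monotone (φ z)) (b : X → ℝ) :
    ∃ V : X → ℝ, ∀ z, (A *ᵥ V) z + φ z (V z) = b z := by
  obtain ⟨s, hs⟩ := Finite.bddAbove_range fun z => |b z - φ z 0| / (A *ᵥ w) z
  set s₀ := max s 0
  have hs₀ : ∀ z, |b z - φ z 0| ≤ s₀ * (A *ᵥ w) z := fun z =>
    (div_le_iff₀ (hAw z)).1 ((hs ⟨z, rfl⟩).trans (le_max_left _ _))
  have hsw : ∀ z, 0 ≤ s₀ * w z := fun z => mul_nonneg (le_max_right _ _) (hw z).le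
  refine exists_mulVec_add_eq_of_le hoff (diag_pos_of_mulVec_pos hoff hw hAw) hφc hφm
    (lo := -(s₀ • w)) (hi := s₀ • w)
    (fun z => by simpa using (neg_nonpos.2 (hsw z)).trans (hsw z))
    (fun z => ?_) (fun z => ?_)
  all_goals
    simp only [mulVec_neg, mulVec_smul, Pi.neg_apply, Pi.smul_apply, smul_eq_mul]
    have := abs_le.1 (hs₀ z)
  · linarith [hφm z (neg_nonpos.2 (hsw z))]
  · linarith [hφm z (hsw z)]

end Real

end Matrix

theorem integral_const_sub_rpow {r : ℝ} (hr : -1 < r) (a b c : ℝ) :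
    ∫ s in a..b, (c - s) ^ r = ((c - a) ^ (r + 1) - (c - b) ^ (r + 1)) / (r + 1) := by
  rw [intervalIntegral.integral_comp_sub_left (fun x => x ^ r) c, integral_rpow (Or.inl hr)]

/-- The weight of the increment `V j - V (j - 1)` in `deltaL1 α t V m`: the mean of
`(t m - s) ^ (-α) / Γ(1 - α)` over `[t (j - 1), t j]`. -/
noncomputable def l1Coeff (α : ℝ) (t : ℕ → ℝ) (m j : ℕ) : ℝ :=
  slope (fun x : ℝ => x ^ (1 - α)) (t m - t j) (t m - t (j - 1)) / Gamma (2 - α)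

section L1Coeff

variable {α : ℝ} {t : ℕ → ℝ} {M m j : ℕ}

theorem Gamma_two_sub (hα : α ≠ 1) : Gamma (2 - α) = (1 - α) * Gamma (1 - α) := by
  rw [show 2 - α = (1 - α) + 1 by ring, Gamma_add_one (sub_ne_zero.2 hα.symm)]

theorem deltaL1_eq_sum_l1Coeff (hα : α < 1) (t V : ℕ → ℝ) (m : ℕ) :
    deltaL1 α t V m = ∑ j ∈ Icc 1 m, l1Coeff α t m j * (V j - V (j - 1)) := by
  rw [deltaL1, mul_sum]
  refine sum_congr rfl fun j _ => ?_
  rw [integral_const_sub_rpow (by linarith), neg_add_eq_sub, l1Coeff, slope_def_field,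
    Gamma_two_sub hα.ne, show t m - t (j - 1) - (t m - t j) = t j - t (j - 1) by ring]
  simp only [div_eq_mul_inv, mul_inv]
  ring

theorem l1Coeff_pos (hα : α < 1) (ht : StrictMonoOn t (Set.Iic M)) (hj : 1 ≤ j) (hjm : j ≤ m)
    (hm : m ≤ M) : 0 < l1Coeff α t m j := by
  have htj : t (j - 1) < t j := ht (by simp; omega) (by simp; omega) (by omega)
  have htm : t j ≤ t m := ht.monotoneOn (by simp; omega) (by simp; omega) hjm
  rw [l1Coeff, slope_def_field]
  refine div_pos (div_pos (sub_pos.2 ?_) (by linarith)) (Gamma_pos_of_pos (by linarith))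
  exact rpow_lt_rpow (by linarith) (by linarith) (by linarith)

theorem l1Coeff_le_succ (hα : α ∈ Set.Ioo 0 1) (ht : StrictMonoOn t (Set.Iic M)) (hj : 1 ≤ j)
    (hjm : j < m) (hm : m ≤ M) : l1Coeff α t m j ≤ l1Coeff α t m (j + 1) := by
  have h₁ : t (j - 1) < t j := ht (by simp; omega) (by simp; omega) (by omega)
  have h₂ : t j < t (j + 1) := ht (by simp; omega) (by simp; omega) (by omega)
  have h₃ : t (j + 1) ≤ t m := ht.monotoneOn (by simp; omega) (by simp; omega) hjm
  rw [l1Coeff, l1Coeff, Nat.add_sub_cancel, slope_def_field, slope_def_field]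
  gcongr ?_ / _
  · exact (Gamma_pos_of_pos (by linarith [hα.2])).le
  exact ((strictConcaveOn_rpow (by linarith [hα.2]) (by linarith [hα.1])).concaveOn
    |>.slope_anti_adjacent (x := t m - t (j + 1)) (by simp; linarith) (by simp; linarith)
      (by linarith) (by linarith))

theorem l1Coeff_self (hα : α ≠ 1) (hm : t (m - 1) < t m) :
    l1Coeff α t m m = (t m - t (m - 1)) ^ (-α) / Gamma (2 - α) := by
  rw [l1Coeff, slope_def_field, sub_self, sub_zero, zero_rpow (sub_ne_zero.2 hα.symm),
    sub_zero, show -α = (1 - α) - 1 by ring, rpow_sub_one (by linarith)]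

theorem le_l1Coeff_self {lam : ℝ} (hα : α ≠ 1) (hm : t (m - 1) < t m)
    (hlam : lam * (t m - t (m - 1)) ^ α ≤ 1 / Gamma (2 - α)) : lam ≤ l1Coeff α t m m := by
  have hτ : 0 < (t m - t (m - 1)) ^ α := rpow_pos_of_pos (by linarith) α
  rw [l1Coeff_self hα hm, rpow_neg (by linarith),
    show ((t m - t (m - 1)) ^ α)⁻¹ / Gamma (2 - α) = 1 / Gamma (2 - α) / (t m - t (m - 1)) ^ α by
      ring, le_div_iff₀ hτ]
  exact hlam

theorem deltaL1_le_l1Coeff_mul (hα : α ∈ Set.Ioo 0 1) (ht : StrictMonoOn t (Set.Iic M))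
    (hm : 1 ≤ m) (hmM : m ≤ M) {V : ℕ → ℝ} (hV : ∀ j < m, 0 ≤ V j) :
    deltaL1 α t V m ≤ l1Coeff α t m m * V m := by
  rw [deltaL1_eq_sum_l1Coeff hα.2]
  exact sum_Icc_mul_sub_le hm (l1Coeff_pos hα.2 ht le_rfl hm hmM).le
    (fun j hj hjm => l1Coeff_le_succ hα ht hj hjm hmM) hV

end L1Coeff

theorem deltaL1_sub (α : ℝ) (t V W : ℕ → ℝ) (m : ℕ) :
    deltaL1 α t (fun j => V j - W j) m = deltaL1 α t V m - deltaL1 α t W m := by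
  simp only [deltaL1]
  rw [← mul_sub, ← sum_sub_distrib]
  congr 1
  exact sum_congr rfl fun j _ => by ring

theorem deltaL1_congr (α : ℝ) (t : ℕ → ℝ) {V W : ℕ → ℝ} {m : ℕ} (h : ∀ j ≤ m, V j = W j) :
    deltaL1 α t V m = deltaL1 α t W m := by
  simp only [deltaL1]
  congr 1
  refine sum_congr rfl fun j hj => ?_
  have hjm := (mem_Icc.1 hj).2
  rw [h j hjm, h (j - 1) (by omega)]

theorem deltaL1_update {α : ℝ} (hα : α < 1) (t V : ℕ → ℝ) {m : ℕ} (hm : 1 ≤ m) (x : ℝ) :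
    deltaL1 α t (Function.update V m x) m = deltaL1 α t V m + l1Coeff α t m m * (x - V m) := by
  obtain ⟨k, rfl⟩ : ∃ k, m = k + 1 := ⟨m - 1, by omega⟩
  rw [deltaL1_eq_sum_l1Coeff hα, deltaL1_eq_sum_l1Coeff hα, sum_Icc_succ_top (by omega),
    sum_Icc_succ_top (by omega), Nat.add_sub_cancel, Function.update_self,
    Function.update_of_ne (by omega)]
  have hlow : ∀ j ∈ Icc 1 k, l1Coeff α t (k + 1) j *
      (Function.update V (k + 1) x j - Function.update V (k + 1) x (j - 1)) =
      l1Coeff α t (k + 1) j * (V j - V (j - 1)) := fun j hj => by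
    have := (mem_Icc.1 hj).2
    rw [Function.update_of_ne (by omega), Function.update_of_ne (by omega)]
  rw [sum_congr rfl hlow]
  ring

noncomputable def l1Residual {X : Type*} [Fintype X] (α : ℝ) (t : ℕ → ℝ)
    (A : ℕ → Matrix X X ℝ) (f : X → ℕ → ℝ → ℝ) (U : ℕ → X → ℝ) (m : ℕ) (z : X) : ℝ :=
  deltaL1 α t (fun j => U j z) m + (A m).mulVec (U m) z + f z m (U m z)

section Scheme

variable {X : Type*} [Fintype X] {α lam : ℝ} {t : ℕ → ℝ} {M : ℕ} {A : ℕ → Matrix X X ℝ}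
  {f : X → ℕ → ℝ → ℝ}

theorem l1Residual_congr {U U' : ℕ → X → ℝ} {m : ℕ} (h : ∀ j ≤ m, U j = U' j) (z : X) :
    l1Residual α t A f U m z = l1Residual α t A f U' m z := by
  simp only [l1Residual, h m le_rfl, deltaL1_congr α t fun j hj => congrFun (h j hj) z]

theorem l1Residual_comparison (hα : α ∈ Set.Ioo 0 1) (ht : StrictMonoOn t (Set.Iic M))
    (hK : ∀ m, 1 ≤ m → m ≤ M → lam ≤ l1Coeff α t m m)
    (hAoff : ∀ m, 1 ≤ m → m ≤ M → ∀ z z' : X, z ≠ z' → A m z z' ≤ 0)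
    (hAw : ∀ m, 1 ≤ m → m ≤ M → ∃ w : X → ℝ, (∀ z, 0 < w z) ∧ ∀ z, 0 < (A m).mulVec w z)
    (hf : ∀ z m s₁ s₂, s₂ ≤ s₁ → f z m s₁ - f z m s₂ ≥ -lam * (s₁ - s₂))
    (Ul Ub : ℕ → X → ℝ) (h0 : ∀ z, Ul 0 z ≤ Ub 0 z)
    (hres : ∀ m, 1 ≤ m → m ≤ M → ∀ z, l1Residual α t A f Ul m z ≤ l1Residual α t A f Ub m z) :
    ∀ m ≤ M, ∀ z, Ul m z ≤ Ub m z := by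
  intro m
  induction m using Nat.strong_induction_on with
  | _ m ih =>
    intro hmM z
    rcases Nat.eq_zero_or_pos m with rfl | hm
    · exact h0 z
    obtain ⟨w, hw, hAw⟩ := hAw m hm hmM
    suffices key : 0 ≤ Ub m - Ul m from sub_nonneg.1 (key z)
    refine Matrix.nonneg_of_mulVec_nonneg_of_neg (hAoff m hm hmM) hw hAw fun z hz => ?_
    rw [Pi.sub_apply] at hz
    have hhist := deltaL1_le_l1Coeff_mul hα ht hm hmM (V := fun j => Ub j z - Ul j z)
      fun j hj => sub_nonneg.2 (ih j hj (by omega) z)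
    rw [deltaL1_sub] at hhist
    have hfz := hf z m (Ul m z) (Ub m z) (by linarith)
    have hKz := mul_nonpos_of_nonneg_of_nonpos (sub_nonneg.2 (hK m hm hmM)) hz.le
    have hresz := hres m hm hmM z
    simp only [l1Residual] at hresz
    rw [Matrix.mulVec_sub, Pi.sub_apply]
    linarith

theorem exists_l1Residual_update_eq_zero (hα : α < 1) {m : ℕ} (hm : 1 ≤ m)
    (hK : lam ≤ l1Coeff α t m m) (hAoff : ∀ z z' : X, z ≠ z' → A m z z' ≤ 0) {w : X → ℝ}
    (hw : ∀ z, 0 < w z) (hAw : ∀ z, 0 < (A m).mulVec w z) (hfc : ∀ z, Continuous (f z m))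
    (hf : ∀ z s₁ s₂, s₂ ≤ s₁ → f z m s₁ - f z m s₂ ≥ -lam * (s₁ - s₂)) (U : ℕ → X → ℝ) :
    ∃ V : X → ℝ, ∀ z, l1Residual α t A f (Function.update U m V) m z = 0 := by
  set K := l1Coeff α t m m
  obtain ⟨V, hV⟩ := Matrix.exists_mulVec_add_eq hAoff hw hAw (φ := fun z s => K * s + f z m s)
    (fun z => (continuous_const.mul continuous_id).add (hfc z))
    (fun z s₂ s₁ h => by nlinarith [hf z s₁ s₂ h, mul_nonneg (sub_nonneg.2 hK) (sub_nonneg.2 h)])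
    (fun z => K * U m z - deltaL1 α t (fun j => U j z) m)
  refine ⟨V, fun z => ?_⟩
  have hcol : (fun j => Function.update U m V j z) = Function.update (fun j => U j z) m (V z) :=
    funext fun j => Function.apply_update (fun _ F => F z) U m V j
  simp only [l1Residual, hcol, deltaL1_update hα t _ hm, Function.update_self]
  linarith [hV z]

theorem exists_l1Residual_eq_zero (hα : α < 1) (hK : ∀ m, 1 ≤ m → m ≤ M → lam ≤ l1Coeff α t m m)
    (hAoff : ∀ m, 1 ≤ m → m ≤ M → ∀ z z' : X, z ≠ z' → A m z z' ≤ 0)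
    (hAw : ∀ m, 1 ≤ m → m ≤ M → ∃ w : X → ℝ, (∀ z, 0 < w z) ∧ ∀ z, 0 < (A m).mulVec w z)
    (hfc : ∀ z m, Continuous (f z m))
    (hf : ∀ z m s₁ s₂, s₂ ≤ s₁ → f z m s₁ - f z m s₂ ≥ -lam * (s₁ - s₂)) (u₀ : X → ℝ) :
    ∃ U : ℕ → X → ℝ, (∀ z, U 0 z = u₀ z) ∧
      ∀ m, 1 ≤ m → m ≤ M → ∀ z, l1Residual α t A f U m z = 0 := by
  suffices h : ∀ n ≤ M, ∃ U : ℕ → X → ℝ, (∀ z, U 0 z = u₀ z) ∧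
      ∀ m, 1 ≤ m → m ≤ n → ∀ z, l1Residual α t A f U m z = 0 by
    obtain ⟨U, hU0, hU⟩ := h M le_rfl
    exact ⟨U, hU0, fun m hm hmM => hU m hm hmM⟩
  intro n
  induction n with
  | zero => exact fun _ => ⟨fun _ => u₀, fun _ => rfl, fun m hm hm0 => by omega⟩
  | succ n ih =>
    intro hn
    obtain ⟨U, hU0, hU⟩ := ih (by omega)
    obtain ⟨w, hw, hAw⟩ := hAw (n + 1) (by omega) hn
    obtain ⟨V, hV⟩ := exists_l1Residual_update_eq_zero hα (by omega) (hK (n + 1) (by omega) hn)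
      (hAoff (n + 1) (by omega) hn) hw hAw (fun z => hfc z (n + 1)) (fun z => hf z (n + 1)) U
    have hold : ∀ j ≤ n, Function.update U (n + 1) V j = U j := fun j hj =>
      Function.update_of_ne (by omega) _ _
    refine ⟨Function.update U (n + 1) V, fun z => by rw [hold 0 n.zero_le]; exact hU0 z,
      fun m hm hmn z => ?_⟩
    rcases Nat.lt_or_eq_of_le hmn with hmn | rfl
    · rw [l1Residual_congr fun j hj => hold j (by omega)]
      exact hU m hm (by omega) z
    · exact hV z

end Scheme
theorem stmt17_general
    (α lam : ℝ) (hα : α ∈ Set.Ioo (0 : ℝ) 1)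
    (M : ℕ) (t : ℕ → ℝ)
    (hmono : ∀ j, j < M → t j < t (j + 1))
    (hmesh : ∀ j, 1 ≤ j → j ≤ M →
      lam * (t j - t (j - 1)) ^ α ≤ 1 / Real.Gamma (2 - α))
    (X : Type*) [Fintype X]
    (A : ℕ → Matrix X X ℝ)
    -- each A m is a nonsingular M-matrix
    (hAoff : ∀ m, 1 ≤ m → m ≤ M → ∀ z z' : X, z ≠ z' → A m z z' ≤ 0)
    (hAw : ∀ m, 1 ≤ m → m ≤ M → ∃ w : X → ℝ,
      (∀ z, 0 < w z) ∧ ∀ z, 0 < (A m).mulVec w z)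
    (f : X → ℕ → ℝ → ℝ)
    (hfc : ∀ z m, Continuous fun s => f z m s)
    (hfA1 : ∀ z m s₁ s₂, s₂ ≤ s₁ → f z m s₁ - f z m s₂ ≥ -lam * (s₁ - s₂))
    (u₀ : X → ℝ) :
    -- (i) existence and uniqueness of the discrete solution
    (∃ U : ℕ → X → ℝ,
      ((∀ z, U 0 z = u₀ z) ∧
        ∀ m, 1 ≤ m → m ≤ M → ∀ z,
          deltaL1 α t (fun j => U j z) m + (A m).mulVec (U m) z
            + f z m (U m z) = 0) ∧
      ∀ U' : ℕ → X → ℝ,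
        ((∀ z, U' 0 z = u₀ z) ∧
          ∀ m, 1 ≤ m → m ≤ M → ∀ z,
            deltaL1 α t (fun j => U' j z) m + (A m).mulVec (U' m) z
              + f z m (U' m z) = 0) →
        ∀ m, m ≤ M → ∀ z, U' m z = U m z) ∧
    -- (ii) every upper solution dominates every solution
    (∀ U : ℕ → X → ℝ,
      ((∀ z, U 0 z = u₀ z) ∧
        ∀ m, 1 ≤ m → m ≤ M → ∀ z,
          deltaL1 α t (fun j => U j z) m + (A m).mulVec (U m) z
            + f z m (U m z) = 0) →
      ∀ Ub : ℕ → X → ℝ,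
        (∀ z, u₀ z ≤ Ub 0 z) →
        (∀ m, 1 ≤ m → m ≤ M → ∀ z,
          0 ≤ deltaL1 α t (fun j => Ub j z) m + (A m).mulVec (Ub m) z
            + f z m (Ub m z)) →
        ∀ m, m ≤ M → ∀ z, U m z ≤ Ub m z) ∧
    -- (iii) every lower solution is dominated by every solution
    (∀ U : ℕ → X → ℝ,
      ((∀ z, U 0 z = u₀ z) ∧
        ∀ m, 1 ≤ m → m ≤ M → ∀ z,
          deltaL1 α t (fun j => U j z) m + (A m).mulVec (U m) z
            + f z m (U m z) = 0) →
      ∀ Ul : ℕ → X → ℝ,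
        (∀ z, Ul 0 z ≤ u₀ z) →
        (∀ m, 1 ≤ m → m ≤ M → ∀ z,
          deltaL1 α t (fun j => Ul j z) m + (A m).mulVec (Ul m) z
            + f z m (Ul m z) ≤ 0) →
        ∀ m, m ≤ M → ∀ z, Ul m z ≤ U m z) := by
  have ht : StrictMonoOn t (Set.Iic M) :=
    strictMonoOn_Iic_of_lt_succ fun j hj => by simpa using hmono j hj
  have hK : ∀ m, 1 ≤ m → m ≤ M → lam ≤ l1Coeff α t m m := fun m hm hmM =>
    le_l1Coeff_self hα.2.ne (ht (by simp; omega) (by simpa) (by omega)) (hmesh m hm hmM)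
  have comp := l1Residual_comparison hα ht hK hAoff hAw hfA1
  obtain ⟨U, hU0, hU⟩ := exists_l1Residual_eq_zero hα.2 hK hAoff hAw hfc hfA1 u₀
  refine ⟨⟨U, ⟨hU0, hU⟩, fun U' hU' m hm z => le_antisymm ?_ ?_⟩, ?_, ?_⟩
  · exact comp U' U (fun z => ((hU'.1 z).trans (hU0 z).symm).le)
      (fun m h1 h2 z => ((hU'.2 m h1 h2 z).trans (hU m h1 h2 z).symm).le) m hm z
  · exact comp U U' (fun z => ((hU0 z).trans (hU'.1 z).symm).le)
      (fun m h1 h2 z => ((hU m h1 h2 z).trans (hU'.2 m h1 h2 z).symm).le) m hm z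
  · intro U' hU' Ub h0 hb m hm z
    exact comp U' Ub (fun z => (hU'.1 z).trans_le (h0 z))
      (fun m h1 h2 z => (hU'.2 m h1 h2 z).trans_le (hb m h1 h2 z)) m hm z
  · intro U' hU' Ul h0 hl m hm z
    exact comp Ul U' (fun z => (h0 z).trans_eq (hU'.1 z).symm)
      (fun m h1 h2 z => (hl m h1 h2 z).trans_eq (hU'.2 m h1 h2 z).symm) m hm z

theorem stmt17
    (α T lam : ℝ) (hα : α ∈ Set.Ioo (0 : ℝ) 1) (hT : 0 < T) (hlam : 0 ≤ lam)
    (M : ℕ) (hM : 1 ≤ M) (t : ℕ → ℝ)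
    (ht0 : t 0 = 0) (htM : t M = T)
    (hmono : ∀ j, j < M → t j < t (j + 1))
    (hmesh : ∀ j, 1 ≤ j → j ≤ M →
      lam * (t j - t (j - 1)) ^ α ≤ 1 / Real.Gamma (2 - α))
    (X : Type*) [Fintype X] [Nonempty X] [DecidableEq X]
    (A : ℕ → Matrix X X ℝ)
    -- each A m is a nonsingular M-matrix
    (hAoff : ∀ m, 1 ≤ m → m ≤ M → ∀ z z' : X, z ≠ z' → A m z z' ≤ 0)
    (hAw : ∀ m, 1 ≤ m → m ≤ M → ∃ w : X → ℝ,
      (∀ z, 0 < w z) ∧ ∀ z, 0 < (A m).mulVec w z)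
    (f : X → ℕ → ℝ → ℝ)
    (hfc : ∀ z m, Continuous fun s => f z m s)
    (hfA1 : ∀ z m s₁ s₂, s₂ ≤ s₁ → f z m s₁ - f z m s₂ ≥ -lam * (s₁ - s₂))
    (u₀ : X → ℝ) :
    -- (i) existence and uniqueness of the discrete solution
    (∃ U : ℕ → X → ℝ,
      ((∀ z, U 0 z = u₀ z) ∧
        ∀ m, 1 ≤ m → m ≤ M → ∀ z,
          deltaL1 α t (fun j => U j z) m + (A m).mulVec (U m) z
            + f z m (U m z) = 0) ∧
      ∀ U' : ℕ → X → ℝ,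
        ((∀ z, U' 0 z = u₀ z) ∧
          ∀ m, 1 ≤ m → m ≤ M → ∀ z,
            deltaL1 α t (fun j => U' j z) m + (A m).mulVec (U' m) z
              + f z m (U' m z) = 0) →
        ∀ m, m ≤ M → ∀ z, U' m z = U m z) ∧
    -- (ii) every upper solution dominates every solution
    (∀ U : ℕ → X → ℝ,
      ((∀ z, U 0 z = u₀ z) ∧
        ∀ m, 1 ≤ m → m ≤ M → ∀ z,
          deltaL1 α t (fun j => U j z) m + (A m).mulVec (U m) z
            + f z m (U m z) = 0) →
      ∀ Ub : ℕ → X → ℝ,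
        (∀ z, u₀ z ≤ Ub 0 z) →
        (∀ m, 1 ≤ m → m ≤ M → ∀ z,
          0 ≤ deltaL1 α t (fun j => Ub j z) m + (A m).mulVec (Ub m) z
            + f z m (Ub m z)) →
        ∀ m, m ≤ M → ∀ z, U m z ≤ Ub m z) ∧
    -- (iii) every lower solution is dominated by every solution
    (∀ U : ℕ → X → ℝ,
      ((∀ z, U 0 z = u₀ z) ∧
        ∀ m, 1 ≤ m → m ≤ M → ∀ z,
          deltaL1 α t (fun j => U j z) m + (A m).mulVec (U m) z
            + f z m (U m z) = 0) →
      ∀ Ul : ℕ → X → ℝ,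
        (∀ z, Ul 0 z ≤ u₀ z) →
        (∀ m, 1 ≤ m → m ≤ M → ∀ z,
          deltaL1 α t (fun j => Ul j z) m + (A m).mulVec (Ul m) z
            + f z m (Ul m z) ≤ 0) →
        ∀ m, m ≤ M → ∀ z, Ul m z ≤ U m z) :=
  stmt17_general α lam hα M t hmono hmesh X A hAoff hAw f hfc hfA1 u₀
end
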